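/- Let (X_1,Y_1), …, (X_n,Y_n) be i.i.d. pairs of finitely-valued random variables and let F_y = f_y(Y^n) for an arbitrary function f_y. Then for each i ∈ {1,…,n}, X_i ↔ (F_y, Y^{i−1}) ↔ X^{i−1} forms a Markov chain; equivalently, H(X_i | F_y, Y^{i−1}, X^{i−1}) = H(X_i | F_y, Y^{i−1}). -/

import Mathlib

open scoped BigOperators

/-- A probability mass function on a finite type, real-valued. -/
structure FinPMF (α : Type) [Fintype α] where
  p : α → ℝ
  nonneg : ∀ a, 0 ≤ p a
  sum_one : ∑ a, p a = 1

namespace FinPMF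

variable {Ω : Type} [Fintype Ω]

/-- The distribution (pushforward pmf) of a finitely-valued random variable. -/
def dist {α : Type} [Fintype α] [DecidableEq α] (μ : FinPMF Ω) (X : Ω → α) (a : α) : ℝ :=
  ∑ ω, if X ω = a then μ.p ω else 0

/-- Shannon entropy `H(X)` (natural logarithm). -/
noncomputable def H {α : Type} [Fintype α] [DecidableEq α] (μ : FinPMF Ω) (X : Ω → α) : ℝ :=
  -∑ a, dist μ X a * Real.log (dist μ X a)

/-- Mutual information `I(X;Y)`. -/
noncomputable def MI {α β : Type} [Fintype α] [DecidableEq α] [Fintype β] [DecidableEq β]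
    (μ : FinPMF Ω) (X : Ω → α) (Y : Ω → β) : ℝ :=
  H μ X + H μ Y - H μ (fun ω => (X ω, Y ω))

/-- Conditional entropy `H(X|Y)`. -/
noncomputable def condH {α β : Type} [Fintype α] [DecidableEq α] [Fintype β] [DecidableEq β]
    (μ : FinPMF Ω) (X : Ω → α) (Y : Ω → β) : ℝ :=
  H μ (fun ω => (X ω, Y ω)) - H μ Y

/-- Conditional mutual information `I(X;Y|Z)`. -/
noncomputable def condMI {α β γ : Type} [Fintype α] [DecidableEq α] [Fintype β] [DecidableEq β]
    [Fintype γ] [DecidableEq γ] (μ : FinPMF Ω) (X : Ω → α) (Y : Ω → β) (Z : Ω → γ) : ℝ :=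
  condH μ X Z + condH μ Y Z - condH μ (fun ω => (X ω, Y ω)) Z

open scoped Classical in
/-- Probability of an event. -/
noncomputable def prob (μ : FinPMF Ω) (S : Ω → Prop) : ℝ :=
  ∑ ω, if S ω then μ.p ω else 0

/-- Conditional independence: `A` and `C` are conditionally independent given `B`
(the Markov chain `A ↔ B ↔ C`). -/
def CondIndep {α β γ : Type} [Fintype α] [DecidableEq α] [Fintype β] [DecidableEq β]
    [Fintype γ] [DecidableEq γ] (μ : FinPMF Ω) (A : Ω → α) (B : Ω → β) (C : Ω → γ) : Prop :=
  ∀ a b c, dist μ (fun ω => (A ω, B ω, C ω)) (a, b, c) * dist μ B b =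
    dist μ (fun ω => (A ω, B ω)) (a, b) * dist μ (fun ω => (B ω, C ω)) (b, c)

/-- The i.i.d. product pmf on `Fin n → Ω`. -/
def iid (μ : FinPMF Ω) (n : ℕ) : FinPMF (Fin n → Ω) where
  p := fun ω => ∏ i, μ.p (ω i)
  nonneg := fun ω => Finset.prod_nonneg fun i _ => μ.nonneg _
  sum_one := by
    have h := Finset.prod_univ_sum (fun _ : Fin n => (Finset.univ : Finset Ω))
      (fun _ a => μ.p a)
    rw [Fintype.piFinset_univ] at h
    rw [← h]
    simp [μ.sum_one]

/-- The product of two pmfs. -/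
def prodPMF {α β : Type} [Fintype α] [Fintype β] (μ : FinPMF α) (ν : FinPMF β) :
    FinPMF (α × β) where
  p := fun ab => μ.p ab.1 * ν.p ab.2
  nonneg := fun ab => mul_nonneg (μ.nonneg _) (ν.nonneg _)
  sum_one := by
    rw [Fintype.sum_prod_type]
    simp_rw [← Finset.mul_sum, ν.sum_one, mul_one]
    exact μ.sum_one

/-- The uniform pmf on a nonempty finite type. -/
noncomputable def uniform (α : Type) [Fintype α] (h : Nonempty α) : FinPMF α where
  p := fun _ => (Fintype.card α : ℝ)⁻¹
  nonneg := fun _ => by positivity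
  sum_one := by
    have hc : (0:ℝ) < Fintype.card α := by
      exact_mod_cast Fintype.card_pos_iff.mpr h
    simp only [Finset.sum_const, Finset.card_univ, nsmul_eq_mul]
    field_simp

/-- The pushforward pmf of a random variable. -/
def push {α : Type} [Fintype α] [DecidableEq α] (μ : FinPMF Ω) (X : Ω → α) : FinPMF α where
  p := dist μ X
  nonneg := fun a => Finset.sum_nonneg fun ω _ => by
    split <;> simp [μ.nonneg]
  sum_one := by
    unfold dist
    rw [Finset.sum_comm]
    simp [μ.sum_one]

end FinPMF

/-!
Proof idea: write `Z = (X_j, Y_j)_j`. Swapping the first `i` coordinates between two independent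
copies `s, t` of `Z` preserves the product weight. When `s` and `t` carry the same `Y`-prefix, the
swap leaves every `Y`-coordinate in place, so it fixes `F_y` and the `Y`-prefix of each copy, keeps
`X_i` in the first copy and moves the `X`-prefix to the other one. Pairing terms along this
involution gives `P(x, b, c) P(b) = P(x, b) P(b, c)`, and such a factorisation makes the
conditional entropy blind to the extra variable.
-/

namespace FinPMF

variable {Ω : Type} [Fintype Ω]

section Dist

variable {α β : Type} [Fintype α] [DecidableEq α] [Fintype β] [DecidableEq β]

theorem dist_nonneg (μ : FinPMF Ω) (X : Ω → α) (a : α) : 0 ≤ dist μ X a :=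
  (push μ X).nonneg a

theorem dist_comp (μ : FinPMF Ω) (Z : Ω → β) (g : β → α) (a : α) :
    dist μ (fun ω => g (Z ω)) a = ∑ z, if g z = a then dist μ Z z else 0 := by
  unfold dist
  calc ∑ ω, (if g (Z ω) = a then μ.p ω else 0)
      = ∑ ω, ∑ z, if Z ω = z then (if g z = a then μ.p ω else 0) else 0 := by
        simp only [Finset.sum_ite_eq, Finset.mem_univ, if_true]
    _ = ∑ z, if g z = a then ∑ ω, (if Z ω = z then μ.p ω else 0) else 0 := by
        rw [Finset.sum_comm]
        refine Finset.sum_congr rfl fun z _ => ?_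
        split_ifs <;> simp

theorem dist_le_dist_comp (μ : FinPMF Ω) (Z : Ω → β) (g : β → α) (z : β) :
    dist μ Z z ≤ dist μ (fun ω => g (Z ω)) (g z) :=
  Finset.sum_le_sum fun ω _ => by
    by_cases h : Z ω = z
    · simp [h]
    · simp only [h, if_false]
      split <;> simp [μ.nonneg]

end Dist

section Entropy

variable {α β γ : Type} [Fintype α] [DecidableEq α] [Fintype β] [DecidableEq β]
  [Fintype γ] [DecidableEq γ]

theorem H_comp (μ : FinPMF Ω) (Z : Ω → β) (g : β → α) :
    H μ (fun ω => g (Z ω)) =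
      -∑ z, dist μ Z z * Real.log (dist μ (fun ω => g (Z ω)) (g z)) := by
  set L := fun a => Real.log (dist μ (fun ω => g (Z ω)) a)
  unfold H
  congr 1
  calc ∑ a, dist μ (fun ω => g (Z ω)) a * L a
      = ∑ a, ∑ z, if g z = a then dist μ Z z * L a else 0 := by
        simp_rw [dist_comp μ Z g, Finset.sum_mul, ite_zero_mul]
    _ = ∑ z, dist μ Z z * L (g z) := by
        rw [Finset.sum_comm]
        simp only [Finset.sum_ite_eq, Finset.mem_univ, if_true]

theorem H_comp_equiv (μ : FinPMF Ω) (Z : Ω → β) (e : β ≃ α) :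
    H μ (fun ω => e (Z ω)) = H μ Z := by
  have hdist : ∀ a, dist μ (fun ω => e (Z ω)) a = dist μ Z (e.symm a) := fun a =>
    Finset.sum_congr rfl fun ω _ => by simp only [← Equiv.eq_symm_apply]
  unfold H
  simp_rw [hdist]
  rw [Equiv.sum_comp e.symm (fun z => dist μ Z z * Real.log (dist μ Z z))]

theorem condH_prod_assoc {β' : Type} [Fintype β'] [DecidableEq β'] (μ : FinPMF Ω) (A : Ω → α)
    (B₁ : Ω → β) (B₂ : Ω → β') (C : Ω → γ) :
    condH μ A (fun ω => (B₁ ω, B₂ ω, C ω)) = condH μ A (fun ω => ((B₁ ω, B₂ ω), C ω)) := by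
  have hBC := H_comp_equiv μ (fun ω => ((B₁ ω, B₂ ω), C ω)) (Equiv.prodAssoc β β' γ)
  have hABC := H_comp_equiv μ (fun ω => (A ω, (B₁ ω, B₂ ω), C ω))
    ((Equiv.refl α).prodCongr (Equiv.prodAssoc β β' γ))
  exact congrArg₂ (· - ·) hABC hBC

theorem condH_eq_of_condIndep (μ : FinPMF Ω) (A : Ω → α) (B : Ω → β) (C : Ω → γ)
    (h : CondIndep μ A B C) :
    condH μ A (fun ω => (B ω, C ω)) = condH μ A B := by
  set Z := fun ω => (A ω, B ω, C ω)
  set p := dist μ Z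
  set pAB := dist μ (fun ω => (A ω, B ω))
  set pBC := dist μ (fun ω => (B ω, C ω))
  set pB := dist μ B
  have hAB : H μ (fun ω => (A ω, B ω)) = -∑ x, p x * Real.log (pAB (x.1, x.2.1)) :=
    H_comp μ Z fun x => (x.1, x.2.1)
  have hBC : H μ (fun ω => (B ω, C ω)) = -∑ x, p x * Real.log (pBC x.2) :=
    H_comp μ Z fun x => x.2
  have hB : H μ B = -∑ x, p x * Real.log (pB x.2.1) := H_comp μ Z fun x => x.2.1
  have hABC : H μ Z = -∑ x, p x * Real.log (p x) := rfl
  have key : ∀ x, p x * Real.log (p x) + p x * Real.log (pB x.2.1) =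
      p x * Real.log (pAB (x.1, x.2.1)) + p x * Real.log (pBC x.2) := by
    rintro ⟨a, b, c⟩
    rcases eq_or_ne (p (a, b, c)) 0 with hx | hx
    · simp [hx]
    have hb : pB b ≠ 0 := ((lt_of_le_of_ne (dist_nonneg μ Z _) hx.symm).trans_le
      (dist_le_dist_comp μ Z (fun x => x.2.1) (a, b, c))).ne'
    have hfactor : p (a, b, c) * pB b = pAB (a, b) * pBC (b, c) := h a b c
    have hne : pAB (a, b) * pBC (b, c) ≠ 0 := hfactor ▸ mul_ne_zero hx hb
    rw [← mul_add, ← mul_add, ← Real.log_mul hx hb,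
      ← Real.log_mul (left_ne_zero_of_mul hne) (right_ne_zero_of_mul hne), hfactor]
  have hsum := Finset.sum_congr rfl fun x (_ : x ∈ Finset.univ) => key x
  rw [Finset.sum_add_distrib, Finset.sum_add_distrib] at hsum
  unfold condH
  linarith

end Entropy

section Exchange

theorem _root_.Set.piecewise_piecewise_swap {ι β : Type} {P : Set ι} [∀ j, Decidable (j ∈ P)]
    (f g : ι → β) : P.piecewise (P.piecewise f g) (P.piecewise g f) = f := by
  funext j
  by_cases hj : j ∈ P <;> simp [hj]

variable {ι β α γ δ : Type} [Fintype ι] [DecidableEq ι] [Fintype β] [DecidableEq β]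
  [Fintype α] [DecidableEq α] [Fintype γ] [DecidableEq γ] [Fintype δ] [DecidableEq δ]

theorem condIndep_of_exchange (P : Set ι) [∀ j, Decidable (j ∈ P)] (μ : FinPMF Ω)
    (Z : Ω → ι → β) (q : ι → β → ℝ) (hZ : ∀ s, dist μ Z s = ∏ j, q j (s j))
    (a : (ι → β) → α) (b : (ι → β) → γ) (c : (ι → β) → δ)
    (ha : ∀ s t, a (P.piecewise t s) = a s) (hc : ∀ s t, c (P.piecewise t s) = c t)
    (hb : ∀ s t, b s = b t → b (P.piecewise t s) = b s) :
    CondIndep μ (fun ω => a (Z ω)) (fun ω => b (Z ω)) (fun ω => c (Z ω)) := by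
  intro x y z
  set W := fun s : ι → β => ∏ j, q j (s j)
  have hdist : ∀ {κ : Type} [Fintype κ] [DecidableEq κ] (g : (ι → β) → κ) (k : κ),
      dist μ (fun ω => g (Z ω)) k = ∑ s, if g s = k then W s else 0 := by
    intro κ _ _ g k
    simp only [dist_comp, hZ, W]
  have hswap : Function.Involutive fun st : (ι → β) × (ι → β) =>
      (P.piecewise st.2 st.1, P.piecewise st.1 st.2) := fun st => by
    simp only [Set.piecewise_piecewise_swap]
  have hweight : ∀ s t, W s * W t = W (P.piecewise t s) * W (P.piecewise s t) := by
    intro s t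
    simp only [W, ← Finset.prod_mul_distrib]
    refine Finset.prod_congr rfl fun j _ => ?_
    by_cases hj : j ∈ P <;> simp [hj, mul_comm]
  have hexchange : ∀ s t, ((a s = x ∧ b s = y ∧ c s = z) ∧ b t = y) ↔
      ((a (P.piecewise t s) = x ∧ b (P.piecewise t s) = y) ∧
        b (P.piecewise s t) = y ∧ c (P.piecewise s t) = z) := by
    intro s t
    constructor
    · rintro ⟨⟨rfl, rfl, rfl⟩, hbt⟩
      exact ⟨⟨ha s t, hb s t hbt.symm⟩, (hb t s hbt).trans hbt, hc t s⟩
    · rintro ⟨⟨rfl, hbs⟩, hbt, rfl⟩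
      set s' := P.piecewise t s
      set t' := P.piecewise s t
      have hs : P.piecewise t' s' = s := Set.piecewise_piecewise_swap s t
      have ht : P.piecewise s' t' = t := Set.piecewise_piecewise_swap t s
      refine ⟨⟨?_, ?_, ?_⟩, ?_⟩
      · rw [← hs, ha]
      · rw [← hs, hb _ _ (hbs.trans hbt.symm), hbs]
      · rw [← hs, hc]
      · rw [← ht, hb _ _ (hbt.trans hbs.symm), hbt]
  rw [hdist fun s => (a s, b s, c s), hdist b, hdist fun s => (a s, b s),
    hdist fun s => (b s, c s), Finset.sum_mul_sum, Finset.sum_mul_sum]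
  simp only [ite_zero_mul_ite_zero, Prod.mk.injEq]
  rw [← Fintype.sum_prod_type', ← Fintype.sum_prod_type']
  exact Fintype.sum_equiv hswap.toPerm _ _ fun st => if_congr (hexchange st.1 st.2)
    (hweight st.1 st.2) rfl

end Exchange

theorem condIndep_current_past {𝒳 𝒴 κ : Type} [Fintype 𝒳] [DecidableEq 𝒳] [Fintype 𝒴]
    [DecidableEq 𝒴] [Fintype κ] [DecidableEq κ] {n : ℕ} (μ : FinPMF Ω)
    (Z : Ω → Fin n → 𝒳 × 𝒴) (q : Fin n → 𝒳 × 𝒴 → ℝ) (hZ : ∀ s, dist μ Z s = ∏ j, q j (s j))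
    (f : (Fin n → 𝒴) → κ) (i : Fin n) :
    CondIndep μ (fun ω => (Z ω i).1)
      (fun ω => (f fun j => (Z ω j).2, fun j : Fin i.val => (Z ω (Fin.castLE i.isLt.le j)).2))
      (fun ω => fun j : Fin i.val => (Z ω (Fin.castLE i.isLt.le j)).1) := by
  refine condIndep_of_exchange {j | j < i} μ Z q hZ (fun s => (s i).1)
    (fun s => (f fun j => (s j).2, fun j : Fin i.val => (s (Fin.castLE i.isLt.le j)).2))
    (fun s j => (s (Fin.castLE i.isLt.le j)).1) (fun s t => ?_) (fun s t => ?_) ?_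
  · rw [Set.piecewise_eq_of_notMem {j | j < i} _ _ (lt_irrefl i)]
  · funext j
    rw [Set.piecewise_eq_of_mem {j | j < i} _ _ (show Fin.castLE i.isLt.le j < i from j.isLt)]
  · intro s t hst
    have hY : (fun j => ({j | j < i}.piecewise t s j).2) = fun j => (s j).2 := by
      funext j
      by_cases hj : j < i
      · rw [Set.piecewise_eq_of_mem {j | j < i} _ _ hj]
        exact (congrFun (congrArg Prod.snd hst) ⟨j, hj⟩).symm
      · rw [Set.piecewise_eq_of_notMem {j | j < i} _ _ hj]
    exact congrArg (fun y => (f y, fun j : Fin i.val => y (Fin.castLE i.isLt.le j))) hY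

-- `i : Fin n` is 0-based: the prefixes indexed by `Fin i.val` are the paper's `X^{i-1}`, `Y^{i-1}`.
/-- Let `(X_1,Y_1), …, (X_n,Y_n)` be i.i.d. pairs of finitely-valued random variables (their
joint distribution is the `n`-fold product of a single-letter pmf `q`) and let
`F_y = f_y(Y^n)`.  Then for each `i`, `X_i ↔ (F_y, Y^{i−1}) ↔ X^{i−1}` forms a Markov chain;
equivalently, `H(X_i | F_y, Y^{i−1}, X^{i−1}) = H(X_i | F_y, Y^{i−1})`. -/
theorem markov_chain_past {Ω 𝒳 𝒴 : Type} [Fintype Ω] [Fintype 𝒳] [DecidableEq 𝒳]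
    [Fintype 𝒴] [DecidableEq 𝒴] {n My : ℕ}
    (μ : FinPMF Ω) (X : Ω → Fin n → 𝒳) (Y : Ω → Fin n → 𝒴) (q : FinPMF (𝒳 × 𝒴))
    (hiid : ∀ s : Fin n → 𝒳 × 𝒴,
      dist μ (fun ω => fun i => (X ω i, Y ω i)) s = ∏ i, q.p (s i))
    (fy : (Fin n → 𝒴) → Fin My) (i : Fin n) :
    CondIndep μ (fun ω => X ω i)
      (fun ω => (fy (Y ω), fun j : Fin i.val => Y ω (Fin.castLE i.isLt.le j)))
      (fun ω => fun j : Fin i.val => X ω (Fin.castLE i.isLt.le j)) ∧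
    condH μ (fun ω => X ω i)
      (fun ω => (fy (Y ω), (fun j : Fin i.val => Y ω (Fin.castLE i.isLt.le j)),
        fun j : Fin i.val => X ω (Fin.castLE i.isLt.le j))) =
    condH μ (fun ω => X ω i)
      (fun ω => (fy (Y ω), fun j : Fin i.val => Y ω (Fin.castLE i.isLt.le j))) := by
  have hCI := condIndep_current_past μ (fun ω j => (X ω j, Y ω j)) (fun _ => q.p) hiid fy i
  exact ⟨hCI, (condH_prod_assoc μ _ _ _ _).trans (condH_eq_of_condIndep μ _ _ _ hCI)⟩

end FinPMF
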